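/- arXiv:2602.04111 — 5 statements merged into one kernel-verified Lean document; each statement's English description precedes it below -/
import Mathlib

section
/- Let p be prime, k a divisor of p-1 with k ≠ 1, and A_k = {x^k : x ∈ Z_p^*} the subgroup of k-th powers. If A_k = S₁ + ... + Sₙ for nonempty subsets S₁, ..., Sₙ of Z_p, then |A_k| = ∏_{i=1}^n |Sᵢ|. (One may assume the n = 2 case, the Hanson–Petridis theorem, as a hypothesis.) -/
open Finset Pointwise

variable {p : ℕ}

lemma listSum_nonempty (L : List (Finset (ZMod p))) (h : ∀ s ∈ L, s.Nonempty) :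
    L.sum.Nonempty := by
  induction L with
  | nil => exact ⟨0, by simp⟩
  | cons s t ih =>
      rw [List.sum_cons]
      exact (h s (by simp)).add (ih fun x hx => h x (by simp [hx]))

lemma key_eq {S T W : Finset (ZMod p)} (hW : W.Nonempty)
    (h : S.card * (T + W).card = (S + (T + W)).card) :
    (S + T).card = S.card * T.card := by
  have hinj := Finset.card_add_iff.1 h.symm
  rw [Finset.card_add_iff]
  rintro ⟨x, y⟩ hxy ⟨x', y'⟩ hxy' he
  obtain ⟨w, hw⟩ := hW
  simp only [Set.mem_prod, Finset.mem_coe] at hxy hxy'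
  simp only at he
  have h1 : ((x, y + w) : ZMod p × ZMod p) ∈ (↑S ×ˢ ↑(T + W) : Set (ZMod p × ZMod p)) :=
    ⟨hxy.1, Finset.add_mem_add hxy.2 hw⟩
  have h2 : ((x', y' + w) : ZMod p × ZMod p) ∈ (↑S ×ˢ ↑(T + W) : Set (ZMod p × ZMod p)) :=
    ⟨hxy'.1, Finset.add_mem_add hxy'.2 hw⟩
  have heq := hinj h1 h2 (by simp only; rw [← add_assoc, ← add_assoc, he])
  have hx : x = x' := congrArg Prod.fst heq
  have hy : y + w = y' + w := congrArg Prod.snd heq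
  exact Prod.ext hx (by exact add_right_cancel hy)

lemma aux_list (A : Finset (ZMod p))
    (hHP : ∀ S T : Finset (ZMod p), S.Nonempty → T.Nonempty → S + T = A →
      S.card * T.card = A.card) :
    ∀ (L : List (Finset (ZMod p))) (s : Finset (ZMod p)), s.Nonempty →
      (∀ t ∈ L, t.Nonempty) → (s :: L).sum = A →
      s.card * (L.map Finset.card).prod = A.card := by
  intro L
  induction L with
  | nil =>
      intro s hs _ hsum
      simp only [List.sum_cons, List.sum_nil, add_zero] at hsum
      simp [hsum]
  | cons t rest ih =>
      intro s hs hne hsum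
      have htne : t.Nonempty := hne t (by simp)
      have hrestne : ∀ u ∈ rest, u.Nonempty := fun u hu => hne u (by simp [hu])
      have hW : (rest.sum).Nonempty := listSum_nonempty _ hrestne
      simp only [List.sum_cons] at hsum
      have hsum' : (s + t) + rest.sum = A := by rw [add_assoc]; exact hsum
      have hIH := ih (s + t) (hs.add htne) hrestne (by simpa [List.sum_cons] using hsum')
      have hhp := hHP s (t + rest.sum) hs (htne.add hW) (by rw [← add_assoc]; exact hsum')
      have hst : (s + t).card = s.card * t.card := by
        apply key_eq hW
        rw [hhp, ← hsum]
      simp only [List.map_cons, List.prod_cons] at hIH ⊢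
      rw [← mul_assoc, ← hst, hIH]

theorem stmt4 (p : ℕ) [Fact p.Prime] (k : ℕ) (hk : k ∣ p - 1) (hk1 : k ≠ 1)
    (A : Finset (ZMod p))
    (hA : A = Finset.image (fun y : (ZMod p)ˣ => ((y : ZMod p)) ^ k) Finset.univ)
    (hHP : ∀ S T : Finset (ZMod p), S.Nonempty → T.Nonempty → S + T = A →
      S.card * T.card = A.card)
    (n : ℕ) (hn : 1 ≤ n) (S : Fin n → Finset (ZMod p)) (hSne : ∀ i, (S i).Nonempty)
    (hsum : A = ∑ i, S i) :
    A.card = ∏ i, (S i).card := by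
  obtain ⟨m, rfl⟩ : ∃ m, n = m + 1 := ⟨n - 1, by omega⟩
  have hsum' : (List.ofFn S).sum = A := by rw [List.sum_ofFn, hsum]
  rw [List.ofFn_succ] at hsum'
  have := aux_list A hHP (List.ofFn (fun i => S i.succ)) (S 0) (hSne 0)
    (by intro t ht; rw [List.mem_ofFn] at ht; obtain ⟨i, rfl⟩ := ht; exact hSne _) hsum'
  rw [List.map_ofFn] at this
  have hprod : (List.ofFn (Finset.card ∘ fun i => S i.succ)).prod
      = ∏ i : Fin m, (S i.succ).card := List.prod_ofFn
  rw [hprod] at this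
  rw [Fin.prod_univ_succ]
  exact this.symm
end

section
/- Let p be prime, k | p-1 with k > 1, and suppose the subgroup A_k of k-th powers in Z_p^* is a generalized arithmetic progression. Assuming that every additive decomposition A_k = S₁ + ... + Sₙ into nonempty sets satisfies |A_k| = ∏|Sᵢ|, conclude that |A_k| = 2^n for some positive integer n, and A_k is a proper GAP of dimension n with all Lᵢ = 2, i.e., A_k = a + d₁{0,1} + ... + dₙ{0,1} with all dᵢ ≠ 0 and |A_k| = 2^n. -/
open Finset Pointwise

lemma ap_split (p : ℕ) (d : ZMod p) (L : ℕ) (hL : 2 ≤ L) :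
    (Finset.range L).image (fun x : ℕ => (x : ZMod p) * d) =
      ({0, d} : Finset (ZMod p)) +
        (Finset.range (L - 1)).image (fun x : ℕ => (x : ZMod p) * d) := by
  ext y
  simp only [Finset.mem_image, Finset.mem_range, Finset.mem_add, Finset.mem_insert,
    Finset.mem_singleton]
  constructor
  · rintro ⟨x, hx, rfl⟩
    by_cases hx1 : x < L - 1
    · exact ⟨0, Or.inl rfl, _, ⟨x, hx1, rfl⟩, by ring⟩
    · have hx3 : 1 ≤ x := by omega
      refine ⟨d, Or.inr rfl, ((x - 1 : ℕ) : ZMod p) * d, ⟨x - 1, by omega, rfl⟩, ?_⟩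
      have : ((x : ℕ) : ZMod p) = ((x - 1 : ℕ) : ZMod p) + 1 := by
        have h : x = (x - 1) + 1 := by omega
        rw [h]; push_cast; ring
      rw [this]; ring
  · rintro ⟨u, hu, v, ⟨x, hx, rfl⟩, rfl⟩
    rcases hu with rfl | rfl
    · exact ⟨x, by omega, by ring⟩
    · exact ⟨x + 1, by omega, by push_cast; ring⟩

lemma ap_insert (p : ℕ) (d : ZMod p) (L : ℕ) (hL : 1 ≤ L) :
    (Finset.range L).image (fun x : ℕ => (x : ZMod p) * d) =
      insert (((L - 1 : ℕ) : ZMod p) * d)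
        ((Finset.range (L - 1)).image (fun x : ℕ => (x : ZMod p) * d)) := by
  conv_lhs => rw [show L = (L - 1) + 1 by omega, Finset.range_add_one, Finset.image_insert]

lemma prod_eq_mul_prod_diff {β M : Type*} [CommMonoid M] [DecidableEq β] (s : Finset β)
    (j : β) (hj : j ∈ s) (f : β → M) : ∏ i ∈ s, f i = f j * ∏ i ∈ s \ {j}, f i := by
  rw [Finset.sdiff_singleton_eq_erase, ← Finset.mul_prod_erase s f hj]

lemma sum_eq_add_sum_diff {β M : Type*} [AddCommMonoid M] [DecidableEq β] (s : Finset β)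
    (j : β) (hj : j ∈ s) (f : β → M) : ∑ i ∈ s, f i = f j + ∑ i ∈ s \ {j}, f i := by
  rw [Finset.sdiff_singleton_eq_erase, ← Finset.add_sum_erase s f hj]

theorem stmt5 (p k : ℕ) [Fact p.Prime] (hk : k ∣ p - 1) (hk1 : 1 < k)
    (A : Finset (ZMod p))
    (hA : A = Finset.image (fun y : (ZMod p)ˣ => ((y : ZMod p)) ^ k) Finset.univ)
    (hGAP : ∃ (m : ℕ) (_ : 0 < m) (a : ZMod p) (d : Fin m → ZMod p) (L : Fin m → ℕ),
      (∀ i, d i ≠ 0) ∧ (∀ i, 2 ≤ L i) ∧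
      A = {a} + ∑ i, (Finset.range (L i)).image (fun x : ℕ => (x : ZMod p) * d i))
    (hdirect : ∀ (m : ℕ) (S : Fin m → Finset (ZMod p)), (∀ i, (S i).Nonempty) →
      A = ∑ i, S i → A.card = ∏ i, (S i).card) :
    ∃ (n : ℕ) (_ : 0 < n) (a : ZMod p) (d : Fin n → ZMod p),
      (∀ i, d i ≠ 0) ∧ A = {a} + ∑ i, ({0, d i} : Finset (ZMod p)) ∧
      A.card = 2 ^ n := by
  obtain ⟨m, hm, a, d, L, hd, hL, hsum⟩ := hGAP
  set P : Fin m → Finset (ZMod p) :=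
    fun i => (Finset.range (L i)).image (fun x : ℕ => (x : ZMod p) * d i) with hP
  set P' : Fin m → Finset (ZMod p) :=
    fun i => (Finset.range (L i - 1)).image (fun x : ℕ => (x : ZMod p) * d i) with hP'
  have hPne : ∀ i, (P i).Nonempty := fun i =>
    ⟨0, by simp only [hP, Finset.mem_image, Finset.mem_range]
           exact ⟨0, by have := hL i; omega, by simp⟩⟩
  have hP'ne : ∀ i, (P' i).Nonempty := fun i =>
    ⟨0, by simp only [hP', Finset.mem_image, Finset.mem_range]
           exact ⟨0, by have := hL i; omega, by simp⟩⟩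
  have h0P' : ∀ i, (0 : ZMod p) ∈ P' i := fun i => by
    simp only [hP', Finset.mem_image, Finset.mem_range]
    exact ⟨0, by have := hL i; omega, by simp⟩
  have h1 : A.card = ∏ i, (P i).card := by
    have := hdirect (m + 1) (Fin.cons {a} P) (by
      intro i
      induction i using Fin.cases with
      | zero => rw [Fin.cons_zero]; exact Finset.singleton_nonempty a
      | succ i2 => rw [Fin.cons_succ]; exact hPne i2)
      (by rw [Fin.sum_univ_succ]; simpa using hsum)
    rw [this, Fin.prod_univ_succ]
    simp
  have key : ∀ j, ((L j - 1 : ℕ) : ZMod p) * d j ≠ 0 ∧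
      P j = {0, ((L j - 1 : ℕ) : ZMod p) * d j} ∧ (P j).card = 2 := by
    intro j
    have hsplit : P j = ({0, d j} : Finset (ZMod p)) + P' j := ap_split p (d j) (L j) (hL j)
    set S' : Fin (m + 2) → Finset (ZMod p) :=
      Fin.cons {a} (Fin.cons ({0, d j}) (Function.update P j (P' j))) with hS'
    have hS'ne : ∀ i, (S' i).Nonempty := by
      intro i
      induction i using Fin.cases with
      | zero => rw [hS', Fin.cons_zero]; exact Finset.singleton_nonempty a
      | succ i2 =>
        rw [hS', Fin.cons_succ]
        induction i2 using Fin.cases with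
        | zero => rw [Fin.cons_zero]; exact ⟨0, Finset.mem_insert_self _ _⟩
        | succ i3 =>
          rw [Fin.cons_succ]
          by_cases h : i3 = j
          · subst h; rw [Function.update_self]; exact hP'ne i3
          · rw [Function.update_of_ne h]; exact hPne i3
    have hsum' : A = ∑ i, S' i := by
      rw [Fin.sum_univ_succ, Fin.sum_univ_succ]
      simp only [hS', Fin.cons_zero, Fin.cons_succ]
      rw [Finset.sum_update_of_mem (Finset.mem_univ j)]
      rw [hsum, sum_eq_add_sum_diff Finset.univ j (Finset.mem_univ j) P, hsplit]
      abel
    have h2 := hdirect (m + 2) S' hS'ne hsum'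
    rw [Fin.prod_univ_succ, Fin.prod_univ_succ] at h2
    simp only [hS', Fin.cons_zero, Fin.cons_succ, Finset.card_singleton, one_mul] at h2
    have happ : ∀ x, (Function.update P j (P' j) x).card =
        Function.update (fun i => (P i).card) j (P' j).card x := fun x =>
      Function.apply_update (fun _ s => Finset.card s) P j (P' j) x
    rw [Finset.prod_congr rfl (fun x _ => happ x),
      Finset.prod_update_of_mem (Finset.mem_univ j)] at h2
    have hcard2 : ({0, d j} : Finset (ZMod p)).card = 2 := by
      rw [Finset.card_insert_of_notMem (by simp [Ne.symm (hd j)]), Finset.card_singleton]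
    rw [hcard2] at h2
    have h1' : A.card = (P j).card * ∏ i ∈ Finset.univ \ {j}, (P i).card := by
      rw [h1, prod_eq_mul_prod_diff Finset.univ j (Finset.mem_univ j)]
    have hprodpos : 0 < ∏ i ∈ Finset.univ \ {j}, (P i).card :=
      Finset.prod_pos fun i _ => Finset.card_pos.mpr (hPne i)
    have hcancel : (P j).card = 2 * (P' j).card := by
      have heq := h1'.symm.trans h2
      rw [← mul_assoc] at heq
      exact Nat.eq_of_mul_eq_mul_right hprodpos heq
    have hins : P j = insert (((L j - 1 : ℕ) : ZMod p) * d j) (P' j) :=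
      ap_insert p (d j) (L j) (by have := hL j; omega)
    have hle : (P j).card ≤ (P' j).card + 1 := by
      rw [hins]; exact Finset.card_insert_le _ _
    have hP'pos : 1 ≤ (P' j).card := Finset.card_pos.mpr (hP'ne j)
    have hP'1 : (P' j).card = 1 := by omega
    have hPj2 : (P j).card = 2 := by omega
    have hP'eq : P' j = {(0 : ZMod p)} := by
      obtain ⟨x, hx⟩ := Finset.card_eq_one.mp hP'1
      have h0 := h0P' j
      rw [hx] at h0 ⊢
      simp only [Finset.mem_singleton] at h0
      rw [h0]
    have hPeq : P j = {0, ((L j - 1 : ℕ) : ZMod p) * d j} := by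
      rw [hins, hP'eq, Finset.pair_comm]
    refine ⟨?_, hPeq, hPj2⟩
    intro h0
    rw [hPeq, h0] at hPj2
    simp at hPj2
  refine ⟨m, hm, a, fun i => ((L i - 1 : ℕ) : ZMod p) * d i, fun i => (key i).1, ?_, ?_⟩
  · rw [hsum]
    congr 1
    exact Finset.sum_congr rfl fun i _ => (key i).2.1
  · rw [h1, Finset.prod_congr rfl fun i _ => (key i).2.2]
    simp
end

section
/- Let p be prime, k | p-1, k ≠ 1, and A_k the subgroup of k-th powers in Z_p^* with |A_k| = t. Suppose A_k = S₁ + ... + Sₙ where each Sᵢ ⊆ Z_p has cardinality exactly 2 and the sum is direct (|A_k| = 2^n = t). Then there exists c ∈ Z_p with c ≠ 0 such that the representation function r(c) = #{(x,y) ∈ A_k × A_k : x + y = c} satisfies r(c) ≥ t/2. -/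
/-!
If `n = 0` then `A = {1}` and the pair `(1, 1)` represents `c = 2`, which is nonzero because
`k ≠ 1` rules out `p = 2`. If `n ≥ 1` then `|A|` is even, so by Cauchy's theorem the subgroup `A`
of `(ZMod p)ˣ` contains an element of order 2, i.e. `-1`, and `A = -A`. Writing
`A = {s, s'} + B`, with `B` the sum of the other `n - 1` sets, gives `|A| ≤ 2 |B|`, and for
`c = s - s'` each `u ∈ B` yields the representation `c = (s + u) + (-(s' + u))` with both
summands in `A`.
-/

open Finset Pointwise

theorem Subgroup.neg_one_mem_of_two_dvd_card {R : Type*} [CommRing R] [IsDomain R]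
    {H : Subgroup Rˣ} [Finite H] (h2 : 2 ∣ Nat.card H) : -1 ∈ H := by
  have : Fact (Nat.Prime 2) := ⟨Nat.prime_two⟩
  obtain ⟨u, hu⟩ := exists_prime_orderOf_dvd_card' 2 h2
  rw [← Subgroup.orderOf_coe, ← orderOf_units, orderOf_eq_prime_iff, sq_eq_one_iff] at hu
  obtain ⟨hsq | hneg, hne⟩ := hu
  · exact absurd hsq hne
  · exact (Units.ext hneg : (u : Rˣ) = -1) ▸ u.2

theorem neg_mem_image_pow_of_two_dvd_card {F : Type*} [Field F] [Fintype F] [DecidableEq F]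
    (k : ℕ) (h2 : 2 ∣ (univ.image fun y : Fˣ => (y : F) ^ k).card) {x : F}
    (hx : x ∈ univ.image fun y : Fˣ => (y : F) ^ k) :
    -x ∈ univ.image fun y : Fˣ => (y : F) ^ k := by
  set H := (powMonoidHom k : Fˣ →* Fˣ).range
  have hcard : Nat.card H = (univ.image fun y : Fˣ => (y : F) ^ k).card := by
    rw [← Set.ncard_coe_finset, coe_image, coe_univ, Set.image_univ, ← Nat.card_coe_set_eq]
    have hrange : Set.range (fun y : Fˣ => (y : F) ^ k) = Units.val '' (H : Set Fˣ) := by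
      rw [MonoidHom.coe_range, ← Set.range_comp]
      rfl
    rw [hrange, Nat.card_image_of_injective Units.val_injective]
    rfl
  obtain ⟨y, hy⟩ := MonoidHom.mem_range.mp (Subgroup.neg_one_mem_of_two_dvd_card (hcard ▸ h2))
  obtain ⟨z, -, rfl⟩ := mem_image.mp hx
  refine mem_image.mpr ⟨y * z, mem_univ _, ?_⟩
  rw [Units.val_mul, mul_pow, ← Units.val_pow_eq_pow_val, ← powMonoidHom_apply, hy]
  simp

theorem card_le_two_mul_card_filter_add_eq_sub {G : Type*} [AddCommGroup G] [DecidableEq G]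
    {A B : Finset G} {s s' : G} (hneg : ∀ x ∈ A, -x ∈ A) (hA : A = {s, s'} + B) :
    A.card ≤ 2 * ((A ×ˢ A).filter (fun q => q.1 + q.2 = s - s')).card := by
  have hB : A.card ≤ 2 * B.card := hA ▸ card_add_le.trans (Nat.mul_le_mul_right _ card_le_two)
  have hpairs : B.card ≤ ((A ×ˢ A).filter (fun q => q.1 + q.2 = s - s')).card := by
    refine card_le_card_of_injOn (fun u => (s + u, -(s' + u))) (fun u hu => ?_)
      (fun u _ v _ h => add_left_cancel (congrArg Prod.fst h))
    have hmem : ∀ a ∈ ({s, s'} : Finset G), a + u ∈ A := fun a ha => hA ▸ add_mem_add ha hu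
    simp only [coe_filter, Set.mem_ofPred_eq, mem_product]
    exact ⟨⟨hmem s (by simp), hneg _ (hmem s' (by simp))⟩, by abel⟩
  omega

theorem stmt6 (p k : ℕ) [Fact p.Prime] (hk : k ∣ p - 1) (hk1 : k ≠ 1)
    (A : Finset (ZMod p))
    (hA : A = Finset.image (fun y : (ZMod p)ˣ => ((y : ZMod p)) ^ k) Finset.univ)
    (n : ℕ) (S : Fin n → Finset (ZMod p)) (hcard : ∀ i, (S i).card = 2)
    (hsum : A = ∑ i, S i) (hdirect : A.card = 2 ^ n) :
    ∃ c : ZMod p, c ≠ 0 ∧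
      A.card ≤ 2 * ((A ×ˢ A).filter (fun q => q.1 + q.2 = c)).card := by
  cases n with
  | zero =>
    have hp2 : p ≠ 2 := by
      rintro rfl
      exact hk1 (Nat.dvd_one.mp hk)
    have h1 : (1 : ZMod p) ∈ A := hA ▸ mem_image.mpr ⟨1, mem_univ _, one_pow k⟩
    obtain ⟨a, rfl⟩ := card_eq_one.mp hdirect
    obtain rfl := mem_singleton.mp h1
    refine ⟨2, Ring.two_ne_zero (by rwa [ZMod.ringChar_zmod_n]), ?_⟩
    rw [singleton_product_singleton, filter_singleton, if_pos one_add_one_eq_two]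
    simp
  | succ m =>
    obtain ⟨s, s', hss', hS0⟩ := card_eq_two.mp (hcard 0)
    refine ⟨s - s', sub_ne_zero_of_ne hss',
      card_le_two_mul_card_filter_add_eq_sub (B := ∑ i : Fin m, S i.succ) (fun x hx => ?_) ?_⟩
    · subst hA
      exact neg_mem_image_pow_of_two_dvd_card k (hdirect ▸ dvd_pow_self 2 m.succ_ne_zero) hx
    · rw [hsum, Fin.sum_univ_succ, hS0]
end

section
/- Let p be prime, k | p-1 with k > 2, and let A_k be the subgroup of k-th powers in Z_p^* with |A_k| = t = 2^n where n ≥ 6. Then A_k cannot be written as S₁ + ... + Sₙ with each |Sᵢ| = 2. Equivalently, if A_k = S₁ + ... + Sₙ for subsets Sᵢ of Z_p with |Sᵢ| ≥ 2, then |Sᵢ| ≥ 3 for some i. (One may assume as hypotheses: the Hanson–Petridis direct-sum property, the Hasse–Weil bound r(c) ≤ (p+1)/k² + ((k-1)(k-2)/k²)√p for c ≠ 0, and Mattarei's bound r(c) ≤ 3·2^(-2/3) t^(2/3) for c ≠ 0 when k ≥ 4 and t ≤ k³/4.) -/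
/-!
The subgroup `A` of `k`-th powers in `𝔽_p^*` has order `t = (p - 1) / k = 2 ^ n`, so it is the
group of `t`-th roots of unity; as `t` is even it contains `-1`, hence `A = -A`. If all summands
had two elements, write `A = {a, b} + B`; then `t ≤ 2 |B|`, and for every `y ∈ B` the pair
`(a + y, -(b + y))` represents `a - b ≠ 0` as a sum of two elements of `A`, so `r(a - b) ≥ t / 2`.
For `t ≥ 64` this contradicts Mattarei's bound when `k ≥ 4` and `4t ≤ k³`, and the Hasse–Weil
bound otherwise, since then `k ≤ t / 4 - 1`, i.e. `√p ≤ t / 2 - 1`.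
-/

open Finset Pointwise

section RootsOfUnity

variable {R : Type*} [CommRing R] [IsDomain R]

theorem Finset.eq_nthRootsFinset_card_of_pow_card_eq_one {A : Finset R}
    (h : ∀ x ∈ A, x ^ #A = 1) : A = Polynomial.nthRootsFinset #A (1 : R) := by
  classical
  rcases A.eq_empty_or_nonempty with rfl | hA
  · simp
  refine eq_of_subset_of_card_le
    (fun x hx => (Polynomial.mem_nthRootsFinset hA.card_pos 1).2 (h x hx)) ?_
  rw [Polynomial.nthRootsFinset_def]
  exact (Multiset.toFinset_card_le _).trans (Polynomial.card_nthRoots _ _)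

theorem Finset.neg_mem_of_pow_card_eq_one {A : Finset R} (h : ∀ x ∈ A, x ^ #A = 1)
    (heven : Even #A) {x : R} (hx : x ∈ A) : -x ∈ A := by
  rw [eq_nthRootsFinset_card_of_pow_card_eq_one h,
    Polynomial.mem_nthRootsFinset (card_pos.2 ⟨x, hx⟩), heven.neg_pow]
  exact h x hx

end RootsOfUnity

def reprCount {G : Type*} [AddCommGroup G] [DecidableEq G] (A : Finset G) (c : G) : ℕ :=
  #((A ×ˢ A).filter fun q => q.1 + q.2 = c)

section AddCommGroup

variable {G : Type*} [AddCommGroup G] [DecidableEq G]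

theorem card_le_reprCount_sub {A S B : Finset G} (hneg : ∀ x ∈ A, -x ∈ A) (hSB : S + B ⊆ A)
    {a b : G} (ha : a ∈ S) (hb : b ∈ S) : #B ≤ reprCount A (a - b) := by
  refine card_le_card_of_injOn (fun y => (a + y, -(b + y))) (fun y hy => ?_) ?_
  · simp only [coe_filter, Set.mem_ofPred_eq, mem_product]
    exact ⟨⟨hSB (add_mem_add ha hy), hneg _ (hSB (add_mem_add hb hy))⟩, by abel⟩
  · intro y _ y' _ h
    simpa using congrArg Prod.fst h

theorem exists_card_le_two_mul_reprCount {A S B : Finset G} (hneg : ∀ x ∈ A, -x ∈ A)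
    (hSB : A = S + B) (hS : #S = 2) : ∃ c ≠ 0, #A ≤ 2 * reprCount A c := by
  obtain ⟨a, b, hab, rfl⟩ := card_eq_two.1 hS
  refine ⟨a - b, sub_ne_zero.2 hab, ?_⟩
  calc #A ≤ #{a, b} * #B := hSB ▸ card_add_le
    _ ≤ 2 * reprCount A (a - b) := by
      rw [hS]
      gcongr
      exact card_le_reprCount_sub hneg hSB.ge (by simp) (by simp)

end AddCommGroup

def kthPowers (F : Type*) [Field F] [Fintype F] [DecidableEq F] (k : ℕ) : Finset F :=
  univ.image fun y : Fˣ => (y : F) ^ k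

section FiniteField

variable {F : Type*} [Field F] [Fintype F] [DecidableEq F] {k : ℕ}

theorem card_kthPowers (hk : k ∣ Fintype.card F - 1) :
    #(kthPowers F k) = (Fintype.card F - 1) / k := by
  have himage : kthPowers F k = (univ.image fun y : Fˣ => y ^ k).image Units.val := by
    rw [kthPowers, image_image]; rfl
  rw [himage, card_image_of_injective _ Units.val_injective, ← Set.toFinset_range,
    Set.toFinset_card, ← Nat.card_eq_fintype_card]
  have hrange := IsCyclic.card_powMonoidHom_range Fˣ k
  rwa [Nat.card_eq_fintype_card (α := Fˣ), Fintype.card_units, Nat.gcd_eq_right hk] at hrange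

theorem mul_card_kthPowers (hk : k ∣ Fintype.card F - 1) :
    k * #(kthPowers F k) = Fintype.card F - 1 := by
  rw [card_kthPowers hk, Nat.mul_div_cancel' hk]

theorem pow_card_kthPowers (hk : k ∣ Fintype.card F - 1) {x : F} (hx : x ∈ kthPowers F k) :
    x ^ #(kthPowers F k) = 1 := by
  obtain ⟨y, -, rfl⟩ := mem_image.1 hx
  rw [← pow_mul, mul_card_kthPowers hk, FiniteField.pow_card_sub_one_eq_one _ y.ne_zero]

theorem neg_mem_kthPowers (hk : k ∣ Fintype.card F - 1) (heven : Even #(kthPowers F k))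
    {x : F} (hx : x ∈ kthPowers F k) : -x ∈ kthPowers F k :=
  neg_mem_of_pow_card_eq_one (fun _ => pow_card_kthPowers hk) heven hx

end FiniteField

theorem mattarei_bound_lt_half {T : ℝ} (hT : 55 ≤ T) :
    3 * (2 : ℝ) ^ (-(2 : ℝ) / 3) * T ^ ((2 : ℝ) / 3) < T / 2 := by
  have hT0 : 0 < T := by linarith
  refine lt_of_pow_lt_pow_left₀ 3 (by positivity) ?_
  have hcube_two : ((2 : ℝ) ^ (-(2 : ℝ) / 3)) ^ 3 = 1 / 4 := by
    rw [← Real.rpow_natCast, ← Real.rpow_mul (by norm_num)]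
    norm_num
  have hcube_T : (T ^ ((2 : ℝ) / 3)) ^ 3 = T ^ 2 := by
    rw [← Real.rpow_natCast, ← Real.rpow_mul hT0.le]
    norm_num
  rw [mul_pow, mul_pow, hcube_two, hcube_T]
  nlinarith [mul_pos hT0 hT0]

theorem hasseWeil_bound_lt_half {K T p : ℝ} (hK : 3 ≤ K) (hT : 64 ≤ T) (hKT : K ^ 3 ≤ 4 * T)
    (hp : p = K * T + 1) :
    (p + 1) / K ^ 2 + ((K - 1) * (K - 2) / K ^ 2) * √p < T / 2 := by
  have hK_le : K ≤ T / 4 - 1 := by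
    by_contra! h
    have hcube : (T / 4 - 1) ^ 3 < K ^ 3 := pow_lt_pow_left₀ h (by linarith) (by norm_num)
    have hu : 15 ≤ T / 4 - 1 := by linarith
    nlinarith [mul_le_mul hu hu (by norm_num) (by linarith)]
  have hsqrt : √p ≤ T / 2 - 1 := by
    rw [Real.sqrt_le_left (by linarith)]
    nlinarith
  have hsqrt_term : (K - 1) * (K - 2) * √p ≤ (K - 1) * (K - 2) * (T / 2 - 1) :=
    mul_le_mul_of_nonneg_left hsqrt (by nlinarith)
  calc (p + 1) / K ^ 2 + ((K - 1) * (K - 2) / K ^ 2) * √p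
      = ((p + 1) + (K - 1) * (K - 2) * √p) / K ^ 2 := by ring
    _ < T / 2 := by
      rw [div_lt_iff₀ (by positivity)]
      nlinarith

theorem stmt12_general (p k n : ℕ) [Fact p.Prime] (hk : k ∣ p - 1) (hk2 : 2 < k) (hn : 6 ≤ n)
    (A : Finset (ZMod p))
    (hA : A = Finset.image (fun y : (ZMod p)ˣ => ((y : ZMod p)) ^ k) Finset.univ)
    (ht : A.card = 2 ^ n)
    (hHW : ∀ c : ZMod p, c ≠ 0 →
      ((((A ×ˢ A).filter (fun q => q.1 + q.2 = c)).card : ℝ)) ≤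
        ((p : ℝ) + 1) / (k : ℝ) ^ 2 +
          (((k : ℝ) - 1) * ((k : ℝ) - 2) / (k : ℝ) ^ 2) * Real.sqrt p)
    (hMat : 4 ≤ k → 4 * A.card ≤ k ^ 3 → ∀ c : ZMod p, c ≠ 0 →
      ((((A ×ˢ A).filter (fun q => q.1 + q.2 = c)).card : ℝ)) ≤
        3 * (2 : ℝ) ^ (-(2 : ℝ) / 3) * (A.card : ℝ) ^ ((2 : ℝ) / 3))
    (S : Fin n → Finset (ZMod p)) (hS2 : ∀ i, 2 ≤ (S i).card)
    (hsum : A = ∑ i, S i) :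
    ∃ i, 3 ≤ (S i).card := by
  by_contra! hsmall
  replace hA : A = kthPowers (ZMod p) k := hA
  have hk' : k ∣ Fintype.card (ZMod p) - 1 := by rwa [ZMod.card]
  have hp : p = k * 2 ^ n + 1 := by
    have hmul := mul_card_kthPowers hk'
    rw [← hA, ht, ZMod.card] at hmul
    have := (Fact.out : p.Prime).one_lt
    omega
  have hneg : ∀ x ∈ A, -x ∈ A := by
    subst hA
    exact fun x => neg_mem_kthPowers hk' (ht ▸ (Nat.even_pow.2 ⟨even_two, by omega⟩))
  let i₀ : Fin n := ⟨0, by omega⟩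
  obtain ⟨c, hc, hrepr⟩ :=
    exists_card_le_two_mul_reprCount (B := ∑ i ∈ univ.erase i₀, S i) hneg
      (by rw [hsum, add_sum_erase _ _ (mem_univ i₀)])
      (le_antisymm (Nat.le_of_lt_succ (hsmall i₀)) (hS2 i₀))
  have hreprR : (2 : ℝ) ^ n / 2 ≤ reprCount A c := by
    rw [div_le_iff₀' two_pos]
    exact_mod_cast ht ▸ hrepr
  have h64 : 64 ≤ 2 ^ n := (Nat.pow_le_pow_right two_pos hn).trans' (by norm_num)
  have h64R : (64 : ℝ) ≤ 2 ^ n := by exact_mod_cast h64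
  by_cases hcase : 4 ≤ k ∧ 4 * A.card ≤ k ^ 3
  · refine (mattarei_bound_lt_half (by linarith)).not_ge (hreprR.trans ?_)
    have hMat' := hMat hcase.1 hcase.2 c hc
    rw [ht, Nat.cast_pow, Nat.cast_ofNat] at hMat'
    exact hMat'
  · have hk3 : k ^ 3 ≤ 4 * 2 ^ n := by
      rw [ht] at hcase
      rcases (show k = 3 ∨ 4 ≤ k by omega) with rfl | h4
      · omega
      · have := fun h => hcase ⟨h4, h⟩
        omega
    have hHW' := hasseWeil_bound_lt_half (K := k) (p := p) (by exact_mod_cast hk2) h64R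
      (by exact_mod_cast hk3) (by exact_mod_cast hp)
    exact hHW'.not_ge (hreprR.trans (hHW c hc))

theorem stmt12 (p k n : ℕ) [Fact p.Prime] (hk : k ∣ p - 1) (hk2 : 2 < k) (hn : 6 ≤ n)
    (A : Finset (ZMod p))
    (hA : A = Finset.image (fun y : (ZMod p)ˣ => ((y : ZMod p)) ^ k) Finset.univ)
    (ht : A.card = 2 ^ n)
    (hdirect : ∀ (m : ℕ) (S : Fin m → Finset (ZMod p)), (∀ i, (S i).Nonempty) →
      A = ∑ i, S i → A.card = ∏ i, (S i).card)
    (hHW : ∀ c : ZMod p, c ≠ 0 →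
      ((((A ×ˢ A).filter (fun q => q.1 + q.2 = c)).card : ℝ)) ≤
        ((p : ℝ) + 1) / (k : ℝ) ^ 2 +
          (((k : ℝ) - 1) * ((k : ℝ) - 2) / (k : ℝ) ^ 2) * Real.sqrt p)
    (hMat : 4 ≤ k → 4 * A.card ≤ k ^ 3 → ∀ c : ZMod p, c ≠ 0 →
      ((((A ×ˢ A).filter (fun q => q.1 + q.2 = c)).card : ℝ)) ≤
        3 * (2 : ℝ) ^ (-(2 : ℝ) / 3) * (A.card : ℝ) ^ ((2 : ℝ) / 3))
    (S : Fin n → Finset (ZMod p)) (hS2 : ∀ i, 2 ≤ (S i).card)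
    (hsum : A = ∑ i, S i) :
    ∃ i, 3 ≤ (S i).card :=
  stmt12_general p k n hk hk2 hn A hA ht hHW hMat S hS2 hsum
end

section
/- Let p be prime, k | p-1, k > 1, and A_k the subgroup of k-th powers. Suppose A_k = {0,d₁} + ... + {0,d_{n-1}} + {a, a+dₙ} is a direct sum with all dᵢ ≠ 0, and let c = 2a + d₁ + ... + d_{n-1}. Then for every choice of x₁,...,x_{n-1} ∈ {0,1}, the elements x = a + Σᵢ xᵢdᵢ and y = a + Σᵢ (1-xᵢ)dᵢ both lie in A_k and satisfy x + y = c, and distinct choices of (x₁,...,x_{n-1}) give distinct ordered pairs (x,y); hence r(c) ≥ 2^(n-1). -/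
open Finset Pointwise

theorem stmt17 (p k : ℕ) [Fact p.Prime] (hk : k ∣ p - 1) (hk1 : 1 < k)
    (A : Finset (ZMod p))
    (hA : A = Finset.image (fun y : (ZMod p)ˣ => ((y : ZMod p)) ^ k) Finset.univ)
    (n : ℕ) (a e : ZMod p) (d : Fin n → ZMod p) (hd : ∀ i, d i ≠ 0) (he : e ≠ 0)
    (hsum : A = (∑ i, ({0, d i} : Finset (ZMod p))) + {a, a + e})
    (hdirect : A.card = 2 ^ (n + 1))
    (c : ZMod p) (hc : c = 2 * a + ∑ i, d i) :
    (∀ ε : Fin n → ℕ, (∀ i, ε i ≤ 1) →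
      (a + ∑ i, (ε i : ZMod p) * d i) ∈ A ∧
      (a + ∑ i, ((1 - ε i : ℕ) : ZMod p) * d i) ∈ A ∧
      (a + ∑ i, (ε i : ZMod p) * d i) + (a + ∑ i, ((1 - ε i : ℕ) : ZMod p) * d i) = c) ∧
    (∀ ε ε' : Fin n → ℕ, (∀ i, ε i ≤ 1) → (∀ i, ε' i ≤ 1) →
      a + ∑ i, (ε i : ZMod p) * d i = a + ∑ i, (ε' i : ZMod p) * d i → ε = ε') ∧
    2 ^ n ≤ ((A ×ˢ A).filter (fun q => q.1 + q.2 = c)).card := by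
  classical
  set F : Finset (ZMod p) := ∑ i, ({0, d i} : Finset (ZMod p)) with hF
  -- generic membership lemma
  have memF : ∀ ε : Fin n → ℕ, (∀ i, ε i ≤ 1) →
      (∑ i, (ε i : ZMod p) * d i) ∈ F := by
    intro ε hε
    have : (∑ i, (ε i : ZMod p) * d i) ∈ ((F : Set (ZMod p))) := by
      rw [hF, Finset.coe_sum]
      rw [Set.mem_fintype_sum]
      refine ⟨fun i => (ε i : ZMod p) * d i, fun i => ?_, rfl⟩
      have := hε i
      interval_cases h : ε i <;> simp [h]
    exact_mod_cast this
  have memA : ∀ ε : Fin n → ℕ, (∀ i, ε i ≤ 1) →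
      (a + ∑ i, (ε i : ZMod p) * d i) ∈ A := by
    intro ε hε
    rw [hsum, Finset.mem_add]
    exact ⟨_, memF ε hε, a, by simp, add_comm _ a⟩
  -- part 1
  have part1 : ∀ ε : Fin n → ℕ, (∀ i, ε i ≤ 1) →
      (a + ∑ i, (ε i : ZMod p) * d i) ∈ A ∧
      (a + ∑ i, ((1 - ε i : ℕ) : ZMod p) * d i) ∈ A ∧
      (a + ∑ i, (ε i : ZMod p) * d i) + (a + ∑ i, ((1 - ε i : ℕ) : ZMod p) * d i) = c := by
    intro ε hε
    refine ⟨memA ε hε, memA _ (fun i => Nat.sub_le _ _), ?_⟩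
    have hsum2 : (∑ i, (ε i : ZMod p) * d i) + (∑ i, ((1 - ε i : ℕ) : ZMod p) * d i)
        = ∑ i, d i := by
      rw [← Finset.sum_add_distrib]
      refine Finset.sum_congr rfl fun i _ => ?_
      have := hε i
      interval_cases h : ε i <;> simp [h]
    rw [hc, two_mul]
    linear_combination hsum2
  -- injectivity via cardinality
  have hcardA : A.card = 2 ^ (n + 1) := hdirect
  set f : ((Fin n → Fin 2) × Fin 2) → ZMod p :=
    fun x => a + (x.2 : ZMod p) * e + ∑ i, ((x.1 i : ℕ) : ZMod p) * d i with hf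
  have hsub : A ⊆ Finset.image f Finset.univ := by
    intro z hz
    rw [hsum] at hz
    rw [Finset.mem_add] at hz
    obtain ⟨s, hs, t, ht, hst⟩ := hz
    have hs' : (s : ZMod p) ∈ ((F : Set (ZMod p))) := hs
    rw [hF, Finset.coe_sum, Set.mem_fintype_sum] at hs'
    obtain ⟨g, hg, hgs⟩ := hs'
    choose ε hε using fun i => by
      have := hg i
      simp only [Finset.coe_insert, Set.mem_insert_iff, Finset.coe_singleton,
        Set.mem_singleton_iff] at this
      exact (show ∃ j : Fin 2, g i = ((j : ℕ) : ZMod p) * d i by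
        rcases this with h | h
        · exact ⟨0, by simp [h]⟩
        · exact ⟨1, by simp [h]⟩)
    simp only [Finset.mem_insert, Finset.mem_singleton] at ht
    rcases ht with rfl | rfl
    · refine Finset.mem_image.2 ⟨(ε, 0), Finset.mem_univ _, ?_⟩
      simp only [hf]
      rw [← hst, ← hgs]
      rw [Finset.sum_congr rfl fun i _ => (hε i)]
      simp only [Fin.isValue, Fin.val_zero, Fin.val_one, Nat.cast_zero, Nat.cast_one,
        zero_mul, one_mul, add_zero]
      ring
    · refine Finset.mem_image.2 ⟨(ε, 1), Finset.mem_univ _, ?_⟩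
      simp only [hf]
      rw [← hst, ← hgs]
      rw [Finset.sum_congr rfl fun i _ => (hε i)]
      simp only [Fin.isValue, Fin.val_zero, Fin.val_one, Nat.cast_zero, Nat.cast_one,
        zero_mul, one_mul, add_zero]
      ring
  have hcarddom : (Finset.univ : Finset ((Fin n → Fin 2) × Fin 2)).card = 2 ^ (n + 1) := by
    simp [pow_succ]
  have himeq : A = Finset.image f Finset.univ :=
    Finset.eq_of_subset_of_card_le hsub
      (Finset.card_image_le.trans_eq (hcarddom.trans hcardA.symm))
  have hfinj : Function.Injective f := by
    have hcardim : (Finset.image f Finset.univ).card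
        = (Finset.univ : Finset ((Fin n → Fin 2) × Fin 2)).card := by
      rw [← himeq, hcardA, hcarddom]
    have := Finset.injOn_of_card_image_eq hcardim
    intro x y hxy
    exact this (Finset.mem_coe.2 (Finset.mem_univ x)) (Finset.mem_coe.2 (Finset.mem_univ y)) hxy
  have part2 : ∀ ε ε' : Fin n → ℕ, (∀ i, ε i ≤ 1) → (∀ i, ε' i ≤ 1) →
      a + ∑ i, (ε i : ZMod p) * d i = a + ∑ i, (ε' i : ZMod p) * d i → ε = ε' := by
    intro ε ε' hε hε' heq
    have h1 : f (fun i => (⟨ε i, Nat.lt_succ_of_le (hε i)⟩ : Fin 2), 0)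
        = f (fun i => (⟨ε' i, Nat.lt_succ_of_le (hε' i)⟩ : Fin 2), 0) := by
      simp only [hf]
      simpa using heq
    have := hfinj h1
    funext i
    have := congrFun (congrArg Prod.fst this) i
    exact Fin.mk.inj_iff.1 this
  refine ⟨part1, part2, ?_⟩
  -- part 3
  set g : (Fin n → Fin 2) → ZMod p × ZMod p :=
    fun ε => (a + ∑ i, ((ε i : ℕ) : ZMod p) * d i,
              a + ∑ i, ((1 - (ε i : ℕ) : ℕ) : ZMod p) * d i) with hg
  have hginj : Function.Injective g := by
    intro x y hxy
    have h1 := congrArg Prod.fst hxy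
    simp only [hg] at h1
    have := part2 (fun i => (x i : ℕ)) (fun i => (y i : ℕ))
      (fun i => Nat.lt_succ_iff.1 (x i).2) (fun i => Nat.lt_succ_iff.1 (y i).2) h1
    funext i
    have := congrFun this i
    exact Fin.ext this
  have hgsub : Finset.image g Finset.univ ⊆ (A ×ˢ A).filter (fun q => q.1 + q.2 = c) := by
    intro z hz
    obtain ⟨ε, _, rfl⟩ := Finset.mem_image.1 hz
    have h := part1 (fun i => (ε i : ℕ)) (fun i => Nat.lt_succ_iff.1 (ε i).2)
    simp only [Finset.mem_filter, Finset.mem_product]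
    exact ⟨⟨h.1, h.2.1⟩, h.2.2⟩
  calc (2 : ℕ) ^ n = (Finset.univ : Finset (Fin n → Fin 2)).card := by simp
    _ = (Finset.image g Finset.univ).card :=
        (Finset.card_image_of_injective _ hginj).symm
    _ ≤ _ := Finset.card_le_card hgsub
end
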